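/- arXiv:2310.05252 — 3 statements merged into one kernel-verified Lean document; each statement's English description precedes it below -/
import Mathlib

section
/- On the maximal single-peaked domain (all preferences for men single-peaked with respect to a fixed order on women, and all preferences for women single-peaked with respect to a fixed order on men, with at least two men and two women), no stable matching rule is strategy-proof. -/
/-- A one-to-one matching between men `M` and women `W`; `none` means unmatched. -/
structure Matching (M W : Type*) where
  menMatch : M → Option W
  womenMatch : W → Option M
  consistent : ∀ m w, menMatch m = some w ↔ womenMatch w = some m

/-- A preference profile: each man has a strict linear order over `W ∪ {∅}`
(encoded as `Option W`, with `none` the outside option), and each woman over `M ∪ {∅}`. -/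
structure Profile (M W : Type*) where
  menPref : M → LinearOrder (Option W)
  womenPref : W → LinearOrder (Option M)

variable {M W : Type*}

def IndividuallyRational (μ : Matching M W) (P : Profile M W) : Prop :=
  (∀ m, (P.menPref m).le none (μ.menMatch m)) ∧
  (∀ w, (P.womenPref w).le none (μ.womenMatch w))

def Blocks (m : M) (w : W) (μ : Matching M W) (P : Profile M W) : Prop :=
  (P.menPref m).lt (μ.menMatch m) (some w) ∧
  (P.womenPref w).lt (μ.womenMatch w) (some m)

def Stable (μ : Matching M W) (P : Profile M W) : Prop :=
  IndividuallyRational μ P ∧ ∀ m w, ¬ Blocks m w μ P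

/-- The men-optimal stable matching: stable, and every man weakly prefers it to
any stable matching.  This characterizes the outcome of the men-proposing
deferred acceptance (MPDA) algorithm. -/
def MenOptimalStable (μ : Matching M W) (P : Profile M W) : Prop :=
  Stable μ P ∧
    ∀ ν : Matching M W, Stable ν P → ∀ m, (P.menPref m).le (ν.menMatch m) (μ.menMatch m)

/-- The women-optimal stable matching, i.e. the outcome of women-proposing DA. -/
def WomenOptimalStable (μ : Matching M W) (P : Profile M W) : Prop :=
  Stable μ P ∧
    ∀ ν : Matching M W, Stable ν P → ∀ w, (P.womenPref w).le (ν.womenMatch w) (μ.womenMatch w)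

def Matching.empty (M W : Type*) : Matching M W :=
  ⟨fun _ => none, fun _ => none, by intro m w; simp⟩

/-- The men-proposing deferred acceptance rule `D^M`. -/
noncomputable def mpda (P : Profile M W) : Matching M W :=
  letI := Classical.dec (∃ μ : Matching M W, MenOptimalStable μ P)
  if h : ∃ μ : Matching M W, MenOptimalStable μ P then h.choose else Matching.empty M W

/-- The women-proposing deferred acceptance rule `D^W`. -/
noncomputable def wpda (P : Profile M W) : Matching M W :=
  letI := Classical.dec (∃ μ : Matching M W, WomenOptimalStable μ P)
  if h : ∃ μ : Matching M W, WomenOptimalStable μ P then h.choose else Matching.empty M W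

/-- A domain of preference profiles: a set of admissible preferences for each agent. -/
structure Domain (M W : Type*) where
  men : M → Set (LinearOrder (Option W))
  women : W → Set (LinearOrder (Option M))

/-- Membership of a profile in (the product domain generated by) a domain. -/
def Domain.mem (D : Domain M W) (P : Profile M W) : Prop :=
  (∀ m, P.menPref m ∈ D.men m) ∧ (∀ w, P.womenPref w ∈ D.women w)

def Profile.updateMan [DecidableEq M] (P : Profile M W) (m : M)
    (p : LinearOrder (Option W)) : Profile M W :=
  ⟨Function.update P.menPref m p, P.womenPref⟩

def Profile.updateWoman [DecidableEq W] (P : Profile M W) (w : W)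
    (p : LinearOrder (Option M)) : Profile M W :=
  ⟨P.menPref, Function.update P.womenPref w p⟩

/-- A matching rule is stable on a domain if it selects a stable matching at
every profile of the domain. -/
def StableOn (D : Domain M W) (φ : Profile M W → Matching M W) : Prop :=
  ∀ P, D.mem P → Stable (φ P) P

/-- Strategy-proofness on a domain: no single agent can strictly gain by
misreporting an admissible preference. -/
def StrategyProofOn [DecidableEq M] [DecidableEq W] (D : Domain M W)
    (φ : Profile M W → Matching M W) : Prop :=
  ∀ P, D.mem P →
    (∀ m p, p ∈ D.men m →
      (P.menPref m).le ((φ (P.updateMan m p)).menMatch m) ((φ P).menMatch m)) ∧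
    (∀ w p, p ∈ D.women w →
      (P.womenPref w).le ((φ (P.updateWoman w p)).womenMatch w) ((φ P).womenMatch w))

/-- A coalition `(Sm, Sw)` manipulates `φ` at `P` via the admissible profile `Q`
(which agrees with `P` outside the coalition): every coalition member is
strictly better off at `φ Q` than at `φ P` according to true preferences. -/
def Manipulation (D : Domain M W) (φ : Profile M W → Matching M W)
    (P Q : Profile M W) (Sm : Set M) (Sw : Set W) : Prop :=
  D.mem P ∧ D.mem Q ∧
  (∀ m ∉ Sm, Q.menPref m = P.menPref m) ∧
  (∀ w ∉ Sw, Q.womenPref w = P.womenPref w) ∧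
  (∀ m ∈ Sm, (P.menPref m).lt ((φ P).menMatch m) ((φ Q).menMatch m)) ∧
  (∀ w ∈ Sw, (P.womenPref w).lt ((φ P).womenMatch w) ((φ Q).womenMatch w))

/-- Group strategy-proofness on a domain: no nonempty coalition can manipulate. -/
def GroupStrategyProofOn (D : Domain M W) (φ : Profile M W → Matching M W) : Prop :=
  ¬ ∃ (P Q : Profile M W) (Sm : Set M) (Sw : Set W),
      (Sm.Nonempty ∨ Sw.Nonempty) ∧ Manipulation D φ P Q Sm Sw

/-- Top dominance for women. -/
def TopDominanceWomen (D : Domain M W) : Prop :=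
  ∀ w : W, ∀ x : M, ∀ y z : Option M,
    (∃ P ∈ D.women w, P.lt y (some x) ∧ P.lt z y ∧ P.le none y) →
      ¬ ∃ P' ∈ D.women w, P'.lt z (some x) ∧ P'.lt y z ∧ P'.le none z

/-- Top dominance for men. -/
def TopDominanceMen (D : Domain M W) : Prop :=
  ∀ m : M, ∀ x : W, ∀ y z : Option W,
    (∃ P ∈ D.men m, P.lt y (some x) ∧ P.lt z y ∧ P.le none y) →
      ¬ ∃ P' ∈ D.men m, P'.lt z (some x) ∧ P'.lt y z ∧ P'.le none z

/-- Unrestricted top pairs for men. -/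
def UnrestrictedTopPairsMen (D : Domain M W) : Prop :=
  ∀ m : M,
    (∀ w w' : W, w ≠ w' → ∃ P ∈ D.men m, P.lt (some w') (some w) ∧
        ∀ z : Option W, z ≠ some w → z ≠ some w' → P.lt z (some w')) ∧
    (∀ w : W, ∃ P ∈ D.men m, P.lt none (some w) ∧
        ∀ z : Option W, z ≠ some w → z ≠ none → P.lt z none) ∧
    (∃ P ∈ D.men m, ∀ z : Option W, z ≠ none → P.lt z none)

/-- Unrestricted top pairs for women. -/
def UnrestrictedTopPairsWomen (D : Domain M W) : Prop :=
  ∀ w : W,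
    (∀ m m' : M, m ≠ m' → ∃ P ∈ D.women w, P.lt (some m') (some m) ∧
        ∀ z : Option M, z ≠ some m → z ≠ some m' → P.lt z (some m')) ∧
    (∀ m : M, ∃ P ∈ D.women w, P.lt none (some m) ∧
        ∀ z : Option M, z ≠ some m → z ≠ none → P.lt z none) ∧
    (∃ P ∈ D.women w, ∀ z : Option M, z ≠ none → P.lt z none)

/-- Single-peakedness of a preference over `Option α` with respect to a prior
order `ord` on `α`:  moving away from the peak (the most preferred element of
`α`) on either side makes the preference decline. -/
def SinglePeaked {α : Type*} (ord : LinearOrder α) (P : LinearOrder (Option α)) : Prop :=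
  ∀ peak : α, (∀ a : α, P.le (some a) (some peak)) →
    ∀ a b : α, ((ord.le peak a ∧ ord.lt a b) ∨ (ord.lt b a ∧ ord.le a peak)) →
      P.lt (some b) (some a)

/-- The maximal single-peaked domain with respect to orders on men and women. -/
def maximalSinglePeakedDomain (ordM : LinearOrder M) (ordW : LinearOrder W) : Domain M W :=
  ⟨fun _ => {P | SinglePeaked ordW P}, fun _ => {P | SinglePeaked ordM P}⟩

/-- A domain is single-peaked if all admissible preferences are single-peaked. -/
def Domain.SinglePeakedDomain (D : Domain M W) (ordM : LinearOrder M)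
    (ordW : LinearOrder W) : Prop :=
  (∀ m, ∀ P ∈ D.men m, SinglePeaked ordW P) ∧ (∀ w, ∀ P ∈ D.women w, SinglePeaked ordM P)

/-- Anonymity: all men share the same admissible set, and all women do too. -/
def Domain.Anonymous (D : Domain M W) : Prop :=
  (∀ m m' : M, D.men m = D.men m') ∧ (∀ w w' : W, D.women w = D.women w')

/-- Cyclical inclusion for men. -/
def CyclicalInclusionMen (D : Domain M W) : Prop :=
  ∀ m : M,
    (∃ P ∈ D.men m, ∀ z : Option W, z ≠ none → P.lt z none) ∧
    (∀ w w' : W,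
      (∃ P ∈ D.men m, P.lt (some w') (some w) ∧ P.lt none (some w')) →
      (∃ P ∈ D.men m, P.lt (some w) (some w') ∧ P.lt none (some w)))

/-- Cyclical inclusion for women. -/
def CyclicalInclusionWomen (D : Domain M W) : Prop :=
  ∀ w : W,
    (∃ P ∈ D.women w, ∀ z : Option M, z ≠ none → P.lt z none) ∧
    (∀ m m' : M,
      (∃ P ∈ D.women w, P.lt (some m') (some m) ∧ P.lt none (some m')) →
      (∃ P ∈ D.women w, P.lt (some m) (some m') ∧ P.lt none (some m)))

/-- The unrestricted domain: every strict linear order is admissible. -/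
def fullDomain (M W : Type*) : Domain M W :=
  ⟨fun _ => Set.univ, fun _ => Set.univ⟩

/-!
Take the two least men `m₁ < m₂` and women `w₁ < w₂`, and let `m₁` rank `w₁ ≻ w₂ ≻ ∅`,
`m₂` rank `w₂ ≻ w₁ ≻ ∅`, `w₁` rank `m₂ ≻ m₁ ≻ ∅` and `w₂` rank `m₁ ≻ m₂ ≻ ∅`, all remaining
agents coming after `∅` in increasing order; since the two favourites are the two least agents,
these preferences are single-peaked. Every stable matching marries `m₁` to `w₁` or to `w₂`.
In the first case `w₁` truncates her list to `m₂ ≻ ∅`, which is still single-peaked, and then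
gets `m₂` in every stable matching: were she single, `m₂` would have to be with `w₂`, and the
single `m₁` would block with `w₂`. The second case is the same with the sexes exchanged, `m₁`
truncating his list to `w₁ ≻ ∅`.
-/

section Preferences

variable {α : Type*} [LinearOrder α]

theorem exists_Iio_eq_singleton [Fintype α] (h : 2 ≤ Fintype.card α) :
    ∃ b₁ b₂ : α, Set.Iio b₂ = {b₁} := by
  obtain ⟨n, hn⟩ : ∃ n, Fintype.card α = n + 2 := ⟨_, (Nat.sub_add_cancel h).symm⟩
  let e := Fintype.orderIsoFinOfCardEq α hn
  refine ⟨e 0, e 1, ?_⟩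
  rw [← e.image_Iio, ← Set.image_singleton]
  congr
  ext i
  simp [Fin.lt_one_iff]

def acceptable (p : LinearOrder (Option α)) : Set α := {a | p.lt none (some a)}

theorem singlePeaked_of_peak {P : LinearOrder (Option α)} (p : α)
    (hright : ∀ a b, p ≤ a → a < b → P.lt (some b) (some a))
    (hleft : ∀ a b, b < a → a ≤ p → P.lt (some b) (some a)) :
    SinglePeaked ‹_› P := by
  intro q hq a b hab
  obtain rfl : q = p := by
    by_contra hqp
    rcases lt_or_gt_of_ne hqp with hlt | hlt
    · exact ((P.lt_iff_le_not_ge _ _).1 (hleft p q hlt le_rfl)).2 (hq p)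
    · exact ((P.lt_iff_le_not_ge _ _).1 (hright p q le_rfl hlt)).2 (hq p)
  rcases hab with ⟨hqa, hab⟩ | ⟨hba, haq⟩
  exacts [hright a b hqa hab, hleft a b hba haq]

/-- Ranks `x` above `y` when `(t x, x) < (t y, y)` lexicographically, `∅` counting as below
every element of `α`. -/
@[reducible] def tierPref (t : Option α → ℕ) : LinearOrder (Option α) :=
  LinearOrder.lift' (fun x => OrderDual.toDual (toLex (t x, x) : Lex (ℕ × WithBot α)))
    fun _ _ h => congrArg Prod.snd (toLex.injective (OrderDual.toDual.injective h))

variable {t : Option α → ℕ}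

theorem tierPref_lt_of_lt {x y : Option α} (h : t y < t x) : (tierPref t).lt x y :=
  Prod.Lex.toLex_lt_toLex.2 (Or.inl h)

theorem tierPref_some_lt_some {a b : α} (hab : a < b) (h : t (some a) ≤ t (some b)) :
    (tierPref t).lt (some b) (some a) :=
  Prod.Lex.toLex_lt_toLex.2 (h.lt_or_eq.imp id fun h => ⟨h, WithBot.coe_lt_coe.2 hab⟩)

theorem mem_acceptable_tierPref {a : α} : a ∈ acceptable (tierPref t) ↔ t (some a) < t none :=
  Prod.Lex.toLex_lt_toLex.trans (or_iff_left fun h => (WithBot.not_lt_bot (a : WithBot α)) h.2)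

/-- `p ≻ q ≻ ∅ ≻` the remaining elements in increasing order. -/
@[reducible] def pairPref (p q : α) : LinearOrder (Option α) :=
  tierPref fun
    | none => 2
    | some a => if a = p then 0 else if a = q then 1 else 3

/-- `p ≻ ∅ ≻` the remaining elements in increasing order. -/
@[reducible] def peakPref (p : α) : LinearOrder (Option α) :=
  tierPref fun
    | none => 1
    | some a => if a = p then 0 else 2

theorem acceptable_pairPref (p q : α) : acceptable (pairPref p q) = {p, q} := by
  ext a
  simp only [mem_acceptable_tierPref]
  split_ifs <;> simp_all

theorem acceptable_peakPref (p : α) : acceptable (peakPref p) = {p} := by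
  ext a
  simp only [mem_acceptable_tierPref]
  split_ifs <;> simp_all

theorem pairPref_lt_some_left {p q : α} {y : Option α} (hy : y ≠ some p) :
    (pairPref p q).lt y (some p) := by
  refine tierPref_lt_of_lt ?_
  rcases y with _ | a
  · simp
  · have : a ≠ p := fun h => hy (h ▸ rfl)
    dsimp only
    split_ifs <;> simp_all

theorem pairPref_not_some_left_le {p q : α} {y : Option α} (hy : y ≠ some p) :
    ¬ (pairPref p q).le (some p) y :=
  (((pairPref p q).lt_iff_le_not_ge _ _).1 (pairPref_lt_some_left hy)).2

section LeastPair

variable {b₁ b₂ : α} (h : Set.Iio b₂ = {b₁})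
include h

theorem eq_of_lt_of_Iio_eq {a : α} (ha : a < b₂) : a = b₁ := by
  rw [← Set.mem_singleton_iff, ← h]
  exact ha

theorem lt_of_Iio_eq : b₁ < b₂ := by
  rw [← Set.mem_Iio, h]
  rfl

theorem le_of_Iio_eq (a : α) : b₁ ≤ a := by
  by_contra! ha
  exact ha.ne (eq_of_lt_of_Iio_eq h (ha.trans (lt_of_Iio_eq h)))

theorem ne_of_Iio_eq {p b : α} (hp : p = b₁ ∨ p = b₂) (hb : b₂ < b) : b ≠ p := by
  rcases hp with rfl | rfl
  exacts [((lt_of_Iio_eq h).trans hb).ne', hb.ne']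

theorem singlePeaked_tierPref_of_Iio_eq {p : α} (hp : p = b₁ ∨ p = b₂)
    (htop : ∀ a ≠ p, t (some p) < t (some a)) (hrest : ∀ a b, b₂ < b → t (some a) ≤ t (some b)) :
    SinglePeaked ‹_› (tierPref t) := by
  have hpb₂ : p ≤ b₂ := hp.elim (fun hp => hp ▸ (lt_of_Iio_eq h).le) fun hp => hp.le
  refine singlePeaked_of_peak p (fun a b hpa hab => ?_) fun a b hba hap => ?_
  · refine tierPref_some_lt_some hab ?_
    rcases lt_or_ge b₂ b with hb | hb
    · exact hrest a b hb
    obtain rfl : a = p :=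
      le_antisymm ((eq_of_lt_of_Iio_eq h (hab.trans_le hb)).trans_le (le_of_Iio_eq h p)) hpa
    exact (htop b (hab.ne' ·)).le
  · have hb₂a : b₂ ≤ a :=
      not_lt.1 fun ha => (eq_of_lt_of_Iio_eq h ha ▸ hba).not_ge (le_of_Iio_eq h b)
    obtain rfl : a = p := le_antisymm hap (hpb₂.trans hb₂a)
    exact tierPref_lt_of_lt (htop b hba.ne)

theorem singlePeaked_pairPref_of_Iio_eq {p q : α} (hpq : p = b₁ ∧ q = b₂ ∨ p = b₂ ∧ q = b₁) :
    SinglePeaked ‹_› (pairPref p q) := by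
  have hp : p = b₁ ∨ p = b₂ := hpq.imp And.left And.left
  have hq : q = b₁ ∨ q = b₂ := hpq.symm.imp And.right And.right
  refine singlePeaked_tierPref_of_Iio_eq h hp (fun a ha => ?_) fun a b hb => ?_
  · dsimp only
    split_ifs <;> simp_all
  · have := ne_of_Iio_eq h hp hb
    have := ne_of_Iio_eq h hq hb
    dsimp only
    split_ifs <;> simp_all

theorem singlePeaked_peakPref_of_Iio_eq {p : α} (hp : p = b₁ ∨ p = b₂) :
    SinglePeaked ‹_› (peakPref p) := by
  refine singlePeaked_tierPref_of_Iio_eq h hp (fun a ha => ?_) fun a b hb => ?_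
  · simp [ha]
  · have := ne_of_Iio_eq h hp hb
    dsimp only
    split_ifs <;> simp_all

end LeastPair

end Preferences

def Matching.symm (μ : Matching M W) : Matching W M :=
  ⟨μ.womenMatch, μ.menMatch, fun w m => (μ.consistent m w).symm⟩

def Profile.symm (P : Profile M W) : Profile W M :=
  ⟨P.womenPref, P.menPref⟩

section Update

variable {P : Profile M W}

theorem Profile.updateMan_womenPref [DecidableEq M] (m : M) (p : LinearOrder (Option W)) :
    (P.updateMan m p).womenPref = P.womenPref := rfl

theorem Profile.updateMan_menPref_self [DecidableEq M] (m : M)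
    (p : LinearOrder (Option W)) : (P.updateMan m p).menPref m = p := by
  simp [Profile.updateMan]

theorem Profile.updateMan_menPref_of_ne [DecidableEq M] {m m' : M} (h : m' ≠ m)
    (p : LinearOrder (Option W)) : (P.updateMan m p).menPref m' = P.menPref m' := by
  simp [Profile.updateMan, h]

theorem Profile.updateWoman_menPref [DecidableEq W] (w : W) (p : LinearOrder (Option M)) :
    (P.updateWoman w p).menPref = P.menPref := rfl

theorem Profile.updateWoman_womenPref_self [DecidableEq W] (w : W)
    (p : LinearOrder (Option M)) : (P.updateWoman w p).womenPref w = p := by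
  simp [Profile.updateWoman]

theorem Profile.updateWoman_womenPref_of_ne [DecidableEq W] {w w' : W} (h : w' ≠ w)
    (p : LinearOrder (Option M)) : (P.updateWoman w p).womenPref w' = P.womenPref w' := by
  simp [Profile.updateWoman, h]

theorem Domain.mem_updateMan [DecidableEq M] {D : Domain M W} (hP : D.mem P) {m : M}
    {p : LinearOrder (Option W)} (hp : p ∈ D.men m) : D.mem (P.updateMan m p) := by
  refine ⟨fun m' => ?_, hP.2⟩
  rcases eq_or_ne m' m with rfl | h
  · rwa [Profile.updateMan_menPref_self]
  · rw [Profile.updateMan_menPref_of_ne h]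
    exact hP.1 m'

theorem Domain.mem_updateWoman [DecidableEq W] {D : Domain M W} (hP : D.mem P) {w : W}
    {p : LinearOrder (Option M)} (hp : p ∈ D.women w) : D.mem (P.updateWoman w p) := by
  refine ⟨hP.1, fun w' => ?_⟩
  rcases eq_or_ne w' w with rfl | h
  · rwa [Profile.updateWoman_womenPref_self]
  · rw [Profile.updateWoman_womenPref_of_ne h]
    exact hP.2 w'

end Update

namespace Stable

variable {μ : Matching M W} {P : Profile M W}

theorem symm (hμ : Stable μ P) : Stable μ.symm P.symm :=
  ⟨⟨hμ.1.2, hμ.1.1⟩, fun w m hb => hμ.2 m w ⟨hb.2, hb.1⟩⟩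

theorem mem_acceptable_menMatch (hμ : Stable μ P) {m : M} {w : W} (h : μ.menMatch m = some w) :
    w ∈ acceptable (P.menPref m) :=
  @lt_of_le_of_ne _ (P.menPref m).toPartialOrder _ _ (h ▸ hμ.1.1 m) (Option.some_ne_none w).symm

theorem mem_acceptable_womenMatch (hμ : Stable μ P) {w : W} {m : M} (h : μ.womenMatch w = some m) :
    m ∈ acceptable (P.womenPref w) :=
  hμ.symm.mem_acceptable_menMatch h

theorem menMatch_eq_or_eq (hμ : Stable μ P) {m : M} {w w' : W}
    (hm : acceptable (P.menPref m) = {w, w'}) (hw' : ∀ y ≠ some m, (P.womenPref w').lt y (some m)) :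
    μ.menMatch m = some w ∨ μ.menMatch m = some w' := by
  rcases hμm : μ.menMatch m with _ | v
  · have hmw' : w' ∈ acceptable (P.menPref m) := by simp [hm]
    refine (hμ.2 m w' ⟨hμm ▸ hmw', hw' _ fun h => ?_⟩).elim
    simp [(μ.consistent m w').2 h] at hμm
  · simpa [hm] using hμ.mem_acceptable_menMatch hμm

theorem womenMatch_eq_of_acceptable_eq_singleton (hμ : Stable μ P) {m m' : M} {w w' : W}
    (hmm' : m ≠ m') (hw : acceptable (P.womenPref w) = {m'})
    (hm' : acceptable (P.menPref m') = {w', w}) (hm : acceptable (P.menPref m) = {w, w'})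
    (hw' : ∀ y ≠ some m, (P.womenPref w').lt y (some m)) :
    μ.womenMatch w = some m' := by
  rcases hμw : μ.womenMatch w with _ | v
  swap
  · simpa [hw] using hμ.mem_acceptable_womenMatch hμw
  exfalso
  have hm'w' : μ.menMatch m' = some w' := by
    rcases hμm' : μ.menMatch m' with _ | v
    · have hm'w : w ∈ acceptable (P.menPref m') := by simp [hm']
      have hwm' : m' ∈ acceptable (P.womenPref w) := by simp [hw]
      exact (hμ.2 m' w ⟨hμm' ▸ hm'w, hμw ▸ hwm'⟩).elim
    · obtain rfl | rfl : v = w' ∨ v = w := by simpa [hm'] using hμ.mem_acceptable_menMatch hμm'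
      · rfl
      · simp [(μ.consistent m' v).1 hμm'] at hμw
  rcases hμ.menMatch_eq_or_eq hm hw' with h | h
  · simp [(μ.consistent m w).1 h] at hμw
  · have hw'm := (μ.consistent m w').1 h
    rw [(μ.consistent m' w').1 hm'w', Option.some_inj] at hw'm
    exact hmm' hw'm.symm

theorem menMatch_eq_of_acceptable_eq_singleton (hμ : Stable μ P) {w w' : W} {m m' : M}
    (hww' : w ≠ w') (hm : acceptable (P.menPref m) = {w'})
    (hw' : acceptable (P.womenPref w') = {m', m}) (hw : acceptable (P.womenPref w) = {m, m'})
    (hm' : ∀ y ≠ some w, (P.menPref m').lt y (some w)) :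
    μ.menMatch m = some w' :=
  hμ.symm.womenMatch_eq_of_acceptable_eq_singleton hww' hm hw' hw hm'

end Stable

section OpposedProfile

variable [LinearOrder M] [LinearOrder W] {m₁ m₂ : M} {w₁ w₂ : W}

/-- Man `m₂` and woman `w₁` rank `w₂ ≻ w₁ ≻ ∅` and `m₂ ≻ m₁ ≻ ∅`; every other man ranks
`w₁ ≻ w₂ ≻ ∅` and every other woman `m₁ ≻ m₂ ≻ ∅`. -/
def opposedProfile (m₁ m₂ : M) (w₁ w₂ : W) : Profile M W :=
  ⟨Function.update (fun _ => pairPref w₁ w₂) m₂ (pairPref w₂ w₁),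
    Function.update (fun _ => pairPref m₁ m₂) w₁ (pairPref m₂ m₁)⟩

theorem opposedProfile_menPref_right :
    (opposedProfile m₁ m₂ w₁ w₂).menPref m₂ = pairPref w₂ w₁ := by
  simp [opposedProfile]

theorem opposedProfile_menPref_of_ne {m : M} (h : m ≠ m₂) :
    (opposedProfile m₁ m₂ w₁ w₂).menPref m = pairPref w₁ w₂ := by
  simp [opposedProfile, h]

theorem opposedProfile_womenPref_left :
    (opposedProfile m₁ m₂ w₁ w₂).womenPref w₁ = pairPref m₂ m₁ := by
  simp [opposedProfile]

theorem opposedProfile_womenPref_of_ne {w : W} (h : w ≠ w₁) :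
    (opposedProfile m₁ m₂ w₁ w₂).womenPref w = pairPref m₁ m₂ := by
  simp [opposedProfile, h]

theorem opposedProfile_mem (hm : Set.Iio m₂ = {m₁}) (hw : Set.Iio w₂ = {w₁}) :
    (maximalSinglePeakedDomain ‹_› ‹_›).mem (opposedProfile m₁ m₂ w₁ w₂) := by
  refine ⟨fun m => ?_, fun w => ?_⟩
  · rcases eq_or_ne m m₂ with rfl | h
    · rw [opposedProfile_menPref_right]
      exact singlePeaked_pairPref_of_Iio_eq hw (Or.inr ⟨rfl, rfl⟩)
    · rw [opposedProfile_menPref_of_ne h]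
      exact singlePeaked_pairPref_of_Iio_eq hw (Or.inl ⟨rfl, rfl⟩)
  · rcases eq_or_ne w w₁ with rfl | h
    · rw [opposedProfile_womenPref_left]
      exact singlePeaked_pairPref_of_Iio_eq hm (Or.inr ⟨rfl, rfl⟩)
    · rw [opposedProfile_womenPref_of_ne h]
      exact singlePeaked_pairPref_of_Iio_eq hm (Or.inl ⟨rfl, rfl⟩)

variable {μ : Matching M W}

theorem Stable.menMatch_opposedProfile_eq_or_eq (hm : m₁ ≠ m₂) (hw : w₁ ≠ w₂)
    (hμ : Stable μ (opposedProfile m₁ m₂ w₁ w₂)) :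
    μ.menMatch m₁ = some w₁ ∨ μ.menMatch m₁ = some w₂ := by
  refine hμ.menMatch_eq_or_eq ?_ (w' := w₂) ?_
  · rw [opposedProfile_menPref_of_ne hm, acceptable_pairPref]
  · rw [opposedProfile_womenPref_of_ne hw.symm]
    exact fun _ => pairPref_lt_some_left

theorem Stable.womenMatch_opposedProfile_updateWoman [DecidableEq W] (hm : m₁ ≠ m₂)
    (hw : w₁ ≠ w₂) (hμ : Stable μ ((opposedProfile m₁ m₂ w₁ w₂).updateWoman w₁ (peakPref m₂))) :
    μ.womenMatch w₁ = some m₂ := by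
  refine hμ.womenMatch_eq_of_acceptable_eq_singleton (w' := w₂) hm ?_ ?_ ?_ ?_
  · rw [Profile.updateWoman_womenPref_self, acceptable_peakPref]
  · rw [Profile.updateWoman_menPref, opposedProfile_menPref_right, acceptable_pairPref]
  · rw [Profile.updateWoman_menPref, opposedProfile_menPref_of_ne hm, acceptable_pairPref]
  · rw [Profile.updateWoman_womenPref_of_ne hw.symm, opposedProfile_womenPref_of_ne hw.symm]
    exact fun _ => pairPref_lt_some_left

theorem Stable.menMatch_opposedProfile_updateMan [DecidableEq M] (hm : m₁ ≠ m₂)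
    (hw : w₁ ≠ w₂) (hμ : Stable μ ((opposedProfile m₁ m₂ w₁ w₂).updateMan m₁ (peakPref w₁))) :
    μ.menMatch m₁ = some w₁ := by
  refine hμ.menMatch_eq_of_acceptable_eq_singleton (m' := m₂) hw.symm ?_ ?_ ?_ ?_
  · rw [Profile.updateMan_menPref_self, acceptable_peakPref]
  · rw [Profile.updateMan_womenPref, opposedProfile_womenPref_left, acceptable_pairPref]
  · rw [Profile.updateMan_womenPref, opposedProfile_womenPref_of_ne hw.symm, acceptable_pairPref]
  · rw [Profile.updateMan_menPref_of_ne hm.symm, opposedProfile_menPref_right]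
    exact fun _ => pairPref_lt_some_left

end OpposedProfile

/-- on the maximal single-peaked domain (with at least two men and
two women), no stable matching rule is strategy-proof. -/
theorem no_stable_sp_on_maximal_single_peaked [Fintype M] [Fintype W]
    [DecidableEq M] [DecidableEq W]
    (ordM : LinearOrder M) (ordW : LinearOrder W)
    (hM : 2 ≤ Fintype.card M) (hW : 2 ≤ Fintype.card W)
    (phi : Profile M W → Matching M W)
    (hstable : StableOn (maximalSinglePeakedDomain ordM ordW) phi) :
    ¬ StrategyProofOn (maximalSinglePeakedDomain ordM ordW) phi := by
  let _ := ordM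
  let _ := ordW
  intro hsp
  obtain ⟨m₁, m₂, hm⟩ := exists_Iio_eq_singleton hM
  obtain ⟨w₁, w₂, hw⟩ := exists_Iio_eq_singleton hW
  have hm₁₂ := (lt_of_Iio_eq hm).ne
  have hw₁₂ := (lt_of_Iio_eq hw).ne
  set P := opposedProfile m₁ m₂ w₁ w₂
  have hP : (maximalSinglePeakedDomain ordM ordW).mem P := opposedProfile_mem hm hw
  rcases (hstable P hP).menMatch_opposedProfile_eq_or_eq hm₁₂ hw₁₂ with h | h
  · have htrunc : peakPref m₂ ∈ (maximalSinglePeakedDomain ordM ordW).women w₁ :=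
      singlePeaked_peakPref_of_Iio_eq hm (Or.inr rfl)
    have hP' := Domain.mem_updateWoman hP htrunc
    have hgain := (hsp P hP).2 w₁ _ htrunc
    rw [(hstable _ hP').womenMatch_opposedProfile_updateWoman hm₁₂ hw₁₂,
      (phi P).consistent m₁ w₁ |>.1 h, opposedProfile_womenPref_left] at hgain
    exact pairPref_not_some_left_le (by simpa using hm₁₂) hgain
  · have htrunc : peakPref w₁ ∈ (maximalSinglePeakedDomain ordM ordW).men m₁ :=
      singlePeaked_peakPref_of_Iio_eq hw (Or.inl rfl)
    have hP' := Domain.mem_updateMan hP htrunc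
    have hgain := (hsp P hP).1 m₁ _ htrunc
    rw [(hstable _ hP').menMatch_opposedProfile_updateMan hm₁₂ hw₁₂, h,
      opposedProfile_menPref_of_ne hm₁₂] at hgain
    exact pairPref_not_some_left_le (by simpa using hw₁₂.symm) hgain
end

section
/- Let 𝒫_A be an anonymous single-peaked domain satisfying cyclical inclusion for both sides. If 𝒫_A satisfies top dominance for neither men nor women, then no stable matching rule on 𝒫_A is strategy-proof. -/
variable {M W : Type*}

/-!
Each side's failure of top dominance, together with single-peakedness and cyclical inclusion,
yields two agents `a, b` and a third option `c` (an agent or `∅`) with admissible preferences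
`a ≻ b ≻ c`, `a ≻ c ≻ b` and `b ≻ a ≻ c`. Call them `ma, mb, τ` among the men and `wa, wb, σ`
among the women. In the profile where `ma` and the man `τ` rank `wa ≻ wb ≻ σ`, `mb` ranks
`wb ≻ wa ≻ σ`, `wb` and the woman `σ` rank `ma ≻ mb ≻ τ`, `wa` ranks `mb ≻ ma ≻ τ`, and everybody
else stays single, two deviations pin down every stable matching: if `wb` reports
`ma ≻ τ ≻ mb` she is matched to `ma`, and if `ma` reports `wa ≻ σ ≻ wb` he is matched to `wa`.
So whatever stable matching the rule picks at the profile, either `ma` holds `wb` and gains by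
the second deviation, or `wb` does not hold `ma` and gains by the first.
-/

namespace LinearOrder

variable {β : Type*} (P : LinearOrder β) {a b c : β}

protected lemma lt_trans (h : P.lt a b) (h' : P.lt b c) : P.lt a c :=
  @_root_.lt_trans _ P.toPreorder _ _ _ h h'

protected lemma lt_of_le_of_lt (h : P.le a b) (h' : P.lt b c) : P.lt a c :=
  @_root_.lt_of_le_of_lt _ P.toPreorder _ _ _ h h'

protected lemma lt_of_le_of_ne (h : P.le a b) (h' : a ≠ b) : P.lt a b :=
  @_root_.lt_of_le_of_ne _ P.toPartialOrder _ _ h h'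

protected lemma le_of_lt (h : P.lt a b) : P.le a b :=
  @_root_.le_of_lt _ P.toPreorder _ _ h

protected lemma ne_of_lt (h : P.lt a b) : a ≠ b :=
  @_root_.ne_of_lt _ P.toPreorder _ _ h

protected lemma not_le_of_lt (h : P.lt a b) : ¬ P.le b a :=
  @_root_.not_le_of_gt _ P.toPreorder _ _ h

protected lemma lt_asymm (h : P.lt a b) : ¬ P.lt b a :=
  @_root_.lt_asymm _ P.toPreorder _ _ h

end LinearOrder

section Preferences

variable {α : Type*}

/-- `x ≻ y ≻ z` with `y` acceptable: the pattern in the definition of top dominance. -/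
def Descends (P : LinearOrder (Option α)) (x y z : Option α) : Prop :=
  P.lt y x ∧ P.lt z y ∧ P.le none y

namespace Descends

variable {P : LinearOrder (Option α)} {x y z u : Option α}

lemma none_lt_first (h : Descends P x y z) : P.lt none x :=
  P.lt_of_le_of_lt h.2.2 h.1

lemma lt_first (h : Descends P x y z) (hu : u = none ∨ u = x ∨ u = y ∨ u = z) (hne : u ≠ x) :
    P.lt u x := by
  rcases hu with rfl | rfl | rfl | rfl
  exacts [h.none_lt_first, (hne rfl).elim, h.1, P.lt_trans h.2.1 h.1]

lemma lt_second (h : Descends P x y z) (hu : u = none ∨ u = z) (hne : u ≠ y) : P.lt u y := by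
  rcases hu with rfl | rfl
  exacts [P.lt_of_le_of_ne h.2.2 hne, h.2.1]

end Descends

/-- The first two preferences violate top dominance; the third reverses the top pair of the
first, as cyclical inclusion provides. -/
def IsGadget (S : Set (LinearOrder (Option α))) (a b : α) (c : Option α) : Prop :=
  (∃ P ∈ S, Descends P (some a) (some b) c) ∧ (∃ P ∈ S, Descends P (some a) c (some b)) ∧
    ∃ P ∈ S, Descends P (some b) (some a) c

def Between (ord : LinearOrder α) (a b c : α) : Prop :=
  (ord.lt b a ∧ ord.lt a c) ∨ (ord.lt c a ∧ ord.lt a b)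

lemma between_or_between_or_between (ord : LinearOrder α) {a b c : α} (hab : a ≠ b)
    (hbc : b ≠ c) (hac : a ≠ c) :
    Between ord a b c ∨ Between ord b a c ∨ Between ord c a b := by
  unfold Between
  rcases @lt_or_gt_of_ne _ ord _ _ hab with h₁ | h₁ <;>
    rcases @lt_or_gt_of_ne _ ord _ _ hbc with h₂ | h₂ <;>
    rcases @lt_or_gt_of_ne _ ord _ _ hac with h₃ | h₃ <;>
    tauto

variable [Finite α] {ord : LinearOrder α} {P : LinearOrder (Option α)}

lemma exists_peak (P : LinearOrder (Option α)) (a : α) :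
    ∃ p : α, ∀ b : α, P.le (some b) (some p) :=
  haveI : Nonempty α := ⟨a⟩
  @Finite.exists_max _ _ _ _ P some

lemma SinglePeaked.lt_or_lt (hP : SinglePeaked ord P) {a b c : α} (hba : ord.lt b a)
    (hac : ord.lt a c) : P.lt (some b) (some a) ∨ P.lt (some c) (some a) := by
  obtain ⟨p, hp⟩ := exists_peak P a
  rcases @le_or_gt _ ord p a with h | h
  · exact Or.inr (hP p hp a c (Or.inl ⟨h, hac⟩))
  · exact Or.inl (hP p hp a b (Or.inr ⟨hba, ord.le_of_lt h⟩))

lemma SinglePeaked.lt_of_between (hP : SinglePeaked ord P) {a b c : α}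
    (hbtw : Between ord a b c) (h : P.lt (some a) (some b)) : P.lt (some c) (some a) := by
  rcases hbtw with ⟨hba, hac⟩ | ⟨hca, hab⟩
  · exact (hP.lt_or_lt hba hac).resolve_left (P.lt_asymm h)
  · exact (hP.lt_or_lt hca hab).resolve_right (P.lt_asymm h)

lemma between_of_descends {P' : LinearOrder (Option α)} (hP : SinglePeaked ord P)
    (hP' : SinglePeaked ord P') {x b c : α} (h : Descends P (some x) (some b) (some c))
    (h' : Descends P' (some x) (some c) (some b)) : Between ord x b c := by
  have hxb : x ≠ b := fun e => P.ne_of_lt h.1 (congrArg some e.symm)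
  have hbc : b ≠ c := fun e => P.ne_of_lt h.2.1 (congrArg some e.symm)
  have hxc : x ≠ c := fun e => P'.ne_of_lt h'.1 (congrArg some e.symm)
  rcases between_or_between_or_between ord hxb hbc hxc with hx | hb | hc
  · exact hx
  · exact (P'.lt_asymm h'.2.1 (hP'.lt_of_between hb (P'.lt_trans h'.2.1 h'.1))).elim
  · exact (P.lt_asymm h.2.1 (hP.lt_of_between hc (P.lt_trans h.2.1 h.1))).elim

variable {S : Set (LinearOrder (Option α))}

lemma isGadget_of_descends (hSP : ∀ P ∈ S, SinglePeaked ord P)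
    (hcyc : ∀ a a' : α, (∃ P ∈ S, P.lt (some a') (some a) ∧ P.lt none (some a')) →
      ∃ P ∈ S, P.lt (some a) (some a') ∧ P.lt none (some a))
    {P' : LinearOrder (Option α)} (hPS : P ∈ S) (hP'S : P' ∈ S) {x b : α} {z : Option α}
    (h : Descends P (some x) (some b) z) (h' : Descends P' (some x) z (some b)) :
    IsGadget S x b z := by
  obtain ⟨Q, hQS, hxb, hx⟩ :=
    hcyc x b ⟨P, hPS, h.1, P.lt_of_le_of_ne h.2.2 (Option.some_ne_none b).symm⟩
  refine ⟨⟨P, hPS, h⟩, ⟨P', hP'S, h'⟩, Q, hQS, hxb, ?_, Q.le_of_lt hx⟩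
  cases z with
  | none => exact hx
  | some c =>
    exact (hSP Q hQS).lt_of_between (between_of_descends (hSP P hPS) (hSP P' hP'S) h h') hxb

lemma exists_isGadget (hSP : ∀ P ∈ S, SinglePeaked ord P)
    (hcyc : ∀ a a' : α, (∃ P ∈ S, P.lt (some a') (some a) ∧ P.lt none (some a')) →
      ∃ P ∈ S, P.lt (some a) (some a') ∧ P.lt none (some a))
    {P' : LinearOrder (Option α)} (hPS : P ∈ S) (hP'S : P' ∈ S) {x : α} {y z : Option α}
    (h : Descends P (some x) y z) (h' : Descends P' (some x) z y) :
    ∃ a b c, IsGadget S a b c := by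
  cases y with
  | some b => exact ⟨x, b, z, isGadget_of_descends hSP hcyc hPS hP'S h h'⟩
  | none =>
    cases z with
    | none => exact (P.ne_of_lt h.2.1 rfl).elim
    | some a => exact ⟨x, a, none, isGadget_of_descends hSP hcyc hP'S hPS h' h⟩

end Preferences

section Gadgets

variable {ordM : LinearOrder M} {ordW : LinearOrder W} {D : Domain M W}

lemma exists_isGadget_of_not_topDominanceMen [Finite W] (hsp : D.SinglePeakedDomain ordM ordW)
    (hcim : CyclicalInclusionMen D) (h : ¬ TopDominanceMen D) :
    ∃ m wa wb σ, IsGadget (D.men m) wa wb σ := by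
  simp only [TopDominanceMen, not_forall, not_not] at h
  obtain ⟨m, x, y, z, ⟨P, hP, hPd⟩, P', hP', hP'd⟩ := h
  exact ⟨m, exists_isGadget (hsp.1 m) (hcim m).2 hP hP' hPd hP'd⟩

lemma exists_isGadget_of_not_topDominanceWomen [Finite M] (hsp : D.SinglePeakedDomain ordM ordW)
    (hciw : CyclicalInclusionWomen D) (h : ¬ TopDominanceWomen D) :
    ∃ w ma mb τ, IsGadget (D.women w) ma mb τ := by
  simp only [TopDominanceWomen, not_forall, not_not] at h
  obtain ⟨w, x, y, z, ⟨P, hP, hPd⟩, P', hP', hP'd⟩ := h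
  exact ⟨w, exists_isGadget (hsp.2 w) (hciw w).2 hP hP' hPd hP'd⟩

end Gadgets

section Matching

variable {μ : Matching M W} {R : Profile M W}

lemma Stable.menMatch_eq_none (hst : Stable μ R) {m : M}
    (h : ∀ w, (R.menPref m).lt (some w) none) : μ.menMatch m = none := by
  rcases hm : μ.menMatch m with _ | w
  · rfl
  · exact ((R.menPref m).not_le_of_lt (h w) (hm ▸ hst.1.1 m)).elim

lemma Stable.womenMatch_eq_none (hst : Stable μ R) {w : W}
    (h : ∀ m, (R.womenPref w).lt (some m) none) : μ.womenMatch w = none := by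
  rcases hw : μ.womenMatch w with _ | m
  · rfl
  · exact ((R.womenPref w).not_le_of_lt (h m) (hw ▸ hst.1.2 w)).elim

lemma Stable.womenMatch_cases (hst : Stable μ R) {ma mb : M} {τ : Option M}
    (hidle : ∀ m, m ≠ ma → m ≠ mb → τ ≠ some m → ∀ w, (R.menPref m).lt (some w) none)
    (w : W) : μ.womenMatch w = none ∨ μ.womenMatch w = some ma ∨ μ.womenMatch w = some mb ∨
      μ.womenMatch w = τ := by
  rcases hw : μ.womenMatch w with _ | m
  · exact Or.inl rfl
  · by_contra hne
    simp only [reduceCtorEq, Option.some.injEq, false_or, not_or] at hne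
    have hm := hst.menMatch_eq_none (hidle m hne.1 hne.2.1 (Ne.symm hne.2.2))
    rw [(μ.consistent m w).2 hw] at hm
    exact Option.some_ne_none w hm

lemma Stable.menMatch_cases (hst : Stable μ R) {wa wb : W} {σ : Option W}
    (hidle : ∀ w, w ≠ wa → w ≠ wb → σ ≠ some w → ∀ m, (R.womenPref w).lt (some m) none)
    (m : M) : μ.menMatch m = none ∨ μ.menMatch m = some wa ∨ μ.menMatch m = some wb ∨
      μ.menMatch m = σ := by
  rcases hm : μ.menMatch m with _ | w
  · exact Or.inl rfl
  · by_contra hne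
    simp only [reduceCtorEq, Option.some.injEq, false_or, not_or] at hne
    have hw := hst.womenMatch_eq_none (hidle w hne.1 hne.2.1 (Ne.symm hne.2.2))
    rw [(μ.consistent m w).1 hm] at hw
    exact Option.some_ne_none m hw

/-- The part of the preferences shared by the profile of the proof and its two deviations. -/
structure Configuration (R : Profile M W) (ma mb : M) (τ : Option M) (wa wb : W)
    (σ : Option W) : Prop where
  idle_man : ∀ m, m ≠ ma → m ≠ mb → τ ≠ some m → ∀ w, (R.menPref m).lt (some w) none
  idle_woman : ∀ w, w ≠ wa → w ≠ wb → σ ≠ some w → ∀ m, (R.womenPref w).lt (some m) none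
  descends_mb : Descends (R.menPref mb) (some wb) (some wa) σ
  descends_wa : Descends (R.womenPref wa) (some mb) (some ma) τ

namespace Configuration

variable {ma mb : M} {τ : Option M} {wa wb : W} {σ : Option W}

lemma ma_ne_mb (hC : Configuration R ma mb τ wa wb σ) : ma ≠ mb :=
  fun e => (R.womenPref wa).ne_of_lt hC.descends_wa.1 (congrArg some e)

lemma wa_ne_wb (hC : Configuration R ma mb τ wa wb σ) : wa ≠ wb :=
  fun e => (R.menPref mb).ne_of_lt hC.descends_mb.1 (congrArg some e)

lemma womenMatch_wb_eq (hC : Configuration R ma mb τ wa wb σ)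
    (hma : Descends (R.menPref ma) (some wa) (some wb) σ)
    (hτ : ∀ m, τ = some m → Descends (R.menPref m) (some wa) (some wb) σ)
    (hwb : Descends (R.womenPref wb) (some ma) τ (some mb)) (hst : Stable μ R) :
    μ.womenMatch wb = some ma := by
  have hM := hst.menMatch_cases hC.idle_woman
  have hW := hst.womenMatch_cases hC.idle_man
  by_contra hne
  have hwb_lt : (R.womenPref wb).lt (μ.womenMatch wb) (some ma) :=
    hwb.lt_first ((hW wb).imp_right (Or.imp_right Or.symm)) hne
  have hma_wa : μ.menMatch ma = some wa := by
    have hma_ne : μ.menMatch ma ≠ some wb := mt (μ.consistent ma wb).1 hne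
    rcases hM ma with h | h | h | h
    · exact (hst.2 ma wb ⟨hma.lt_second (Or.inl h) hma_ne, hwb_lt⟩).elim
    · exact h
    · exact (hma_ne h).elim
    · exact (hst.2 ma wb ⟨hma.lt_second (Or.inr h) hma_ne, hwb_lt⟩).elim
  have hwa_ma := (μ.consistent ma wa).1 hma_wa
  have hmb_wb : μ.menMatch mb = some wb := by
    have hwa_lt : (R.womenPref wa).lt (μ.womenMatch wa) (some mb) := hwa_ma ▸ hC.descends_wa.1
    have hmb_ne : μ.menMatch mb ≠ some wa := fun h =>
      hC.ma_ne_mb (Option.some_injective _ (hwa_ma.symm.trans ((μ.consistent mb wa).1 h)))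
    rcases hM mb with h | h | h | h
    · exact (hst.2 mb wa ⟨hC.descends_mb.lt_second (Or.inl h) hmb_ne, hwa_lt⟩).elim
    · exact (hmb_ne h).elim
    · exact h
    · exact (hst.2 mb wa ⟨hC.descends_mb.lt_second (Or.inr h) hmb_ne, hwa_lt⟩).elim
  have hwb_mb := (μ.consistent mb wb).1 hmb_wb
  -- `wb` prefers `τ` to her partner `mb`, and `τ` cannot be matched to anyone he prefers to `wb`.
  cases τ with
  | none => exact (R.womenPref wb).not_le_of_lt hwb.2.1 (hwb_mb ▸ hst.1.2 wb)
  | some m₃ =>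
    have h₃ := hτ m₃ rfl
    have hwb_lt₃ : (R.womenPref wb).lt (μ.womenMatch wb) (some m₃) := hwb_mb ▸ hwb.2.1
    have hm₃_ne : μ.menMatch m₃ ≠ some wb := fun h =>
      (R.womenPref wb).ne_of_lt hwb_lt₃ ((μ.consistent m₃ wb).1 h)
    rcases hM m₃ with h | h | h | h
    · exact hst.2 m₃ wb ⟨h₃.lt_second (Or.inl h) hm₃_ne, hwb_lt₃⟩
    · exact (R.womenPref wb).ne_of_lt hwb.1 (by rw [← hwa_ma, (μ.consistent m₃ wa).1 h])
    · exact hm₃_ne h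
    · exact hst.2 m₃ wb ⟨h₃.lt_second (Or.inr h) hm₃_ne, hwb_lt₃⟩

lemma menMatch_ma_eq (hC : Configuration R ma mb τ wa wb σ)
    (hma : Descends (R.menPref ma) (some wa) σ (some wb))
    (hwb : Descends (R.womenPref wb) (some ma) (some mb) τ)
    (hσ : ∀ w, σ = some w → Descends (R.womenPref w) (some ma) (some mb) τ)
    (hst : Stable μ R) : μ.menMatch ma = some wa := by
  have hM := hst.menMatch_cases hC.idle_woman
  have hW := hst.womenMatch_cases hC.idle_man
  -- `ma` ranks `wb` below `σ`, and the woman `σ` ranks `ma` first.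
  have hma_ne_wb : μ.menMatch ma ≠ some wb := by
    intro h
    cases σ with
    | none => exact (R.menPref ma).not_le_of_lt hma.2.1 (h ▸ hst.1.1 ma)
    | some w₃ =>
      have hw₃_ne : μ.womenMatch w₃ ≠ some ma := fun h' =>
        (R.menPref ma).ne_of_lt hma.2.1 (h.symm.trans ((μ.consistent ma w₃).2 h'))
      exact hst.2 ma w₃ ⟨h ▸ hma.2.1, (hσ w₃ rfl).lt_first (hW w₃) hw₃_ne⟩
  by_contra hne
  have hma_lt : (R.menPref ma).lt (μ.menMatch ma) (some wa) :=
    hma.lt_first ((hM ma).imp_right (Or.imp_right Or.symm)) hne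
  have hwa_ne : μ.womenMatch wa ≠ some ma := mt (μ.consistent ma wa).2 hne
  rcases hW wa with h | h | h | h
  · exact hst.2 ma wa ⟨hma_lt, hC.descends_wa.lt_second (Or.inl h) hwa_ne⟩
  · exact hwa_ne h
  · have hmb_wa := (μ.consistent mb wa).2 h
    have hwb_ne : μ.womenMatch wb ≠ some mb := fun h' =>
      hC.wa_ne_wb (Option.some_injective _ (hmb_wa.symm.trans ((μ.consistent mb wb).2 h')))
    have hwb_lt : (R.womenPref wb).lt (μ.womenMatch wb) (some mb) := by
      rcases hW wb with h' | h' | h' | h'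
      · exact hwb.lt_second (Or.inl h') hwb_ne
      · exact (hma_ne_wb ((μ.consistent ma wb).2 h')).elim
      · exact (hwb_ne h').elim
      · exact hwb.lt_second (Or.inr h') hwb_ne
    exact hst.2 mb wb ⟨hmb_wa ▸ hC.descends_mb.1, hwb_lt⟩
  · exact hst.2 ma wa ⟨hma_lt, hC.descends_wa.lt_second (Or.inr h) hwa_ne⟩

end Configuration

end Matching

section Deviations

variable {D : Domain M W} {R : Profile M W} {ma mb : M} {τ : Option M} {wa wb : W}
  {σ : Option W}

section UpdateMan

variable [DecidableEq M]

namespace Profile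

lemma updateMan_menPref_self_s15 {m : M} (p : LinearOrder (Option W)) :
    (R.updateMan m p).menPref m = p :=
  Function.update_self ..

lemma updateMan_menPref_of_ne_s15 {m m' : M} (p : LinearOrder (Option W)) (h : m' ≠ m) :
    (R.updateMan m p).menPref m' = R.menPref m' :=
  Function.update_of_ne h ..

lemma updateMan_womenPref_s15 (m : M) (p : LinearOrder (Option W)) :
    (R.updateMan m p).womenPref = R.womenPref :=
  rfl

end Profile

lemma Domain.mem.updateMan (hR : D.mem R) {m : M} {p : LinearOrder (Option W)}
    (hp : p ∈ D.men m) : D.mem (R.updateMan m p) := by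
  refine ⟨fun m' => ?_, hR.2⟩
  rcases eq_or_ne m' m with rfl | h
  · rw [Profile.updateMan_menPref_self_s15]; exact hp
  · rw [Profile.updateMan_menPref_of_ne_s15 p h]; exact hR.1 m'

lemma Configuration.updateMan (hC : Configuration R ma mb τ wa wb σ)
    (p : LinearOrder (Option W)) : Configuration (R.updateMan ma p) ma mb τ wa wb σ where
  idle_man m hm := by rw [Profile.updateMan_menPref_of_ne_s15 p hm]; exact hC.idle_man m hm
  idle_woman := hC.idle_woman
  descends_mb := by rw [Profile.updateMan_menPref_of_ne_s15 p hC.ma_ne_mb.symm]; exact hC.descends_mb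
  descends_wa := hC.descends_wa

end UpdateMan

section UpdateWoman

variable [DecidableEq W]

namespace Profile

lemma updateWoman_womenPref_self_s15 {w : W} (p : LinearOrder (Option M)) :
    (R.updateWoman w p).womenPref w = p :=
  Function.update_self ..

lemma updateWoman_womenPref_of_ne_s15 {w w' : W} (p : LinearOrder (Option M)) (h : w' ≠ w) :
    (R.updateWoman w p).womenPref w' = R.womenPref w' :=
  Function.update_of_ne h ..

lemma updateWoman_menPref_s15 (w : W) (p : LinearOrder (Option M)) :
    (R.updateWoman w p).menPref = R.menPref :=
  rfl

end Profile

lemma Domain.mem.updateWoman (hR : D.mem R) {w : W} {p : LinearOrder (Option M)}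
    (hp : p ∈ D.women w) : D.mem (R.updateWoman w p) := by
  refine ⟨hR.1, fun w' => ?_⟩
  rcases eq_or_ne w' w with rfl | h
  · rw [Profile.updateWoman_womenPref_self_s15]; exact hp
  · rw [Profile.updateWoman_womenPref_of_ne_s15 p h]; exact hR.2 w'

lemma Configuration.updateWoman (hC : Configuration R ma mb τ wa wb σ)
    (p : LinearOrder (Option M)) : Configuration (R.updateWoman wb p) ma mb τ wa wb σ where
  idle_man := hC.idle_man
  idle_woman w hwa hwb := by
    rw [Profile.updateWoman_womenPref_of_ne_s15 p hwb]; exact hC.idle_woman w hwa hwb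
  descends_mb := hC.descends_mb
  descends_wa := by rw [Profile.updateWoman_womenPref_of_ne_s15 p hC.wa_ne_wb]; exact hC.descends_wa

end UpdateWoman

variable [DecidableEq M] [DecidableEq W]

def Profile.ofRoles (ma mb : M) (τ : Option M) (wa wb : W) (σ : Option W)
    (S T E : LinearOrder (Option W)) (P Q F : LinearOrder (Option M)) : Profile M W where
  menPref m := if m = mb then T else if m = ma ∨ τ = some m then S else E
  womenPref w := if w = wa then Q else if w = wb ∨ σ = some w then P else F

variable {S T E : LinearOrder (Option W)} {P Q F : LinearOrder (Option M)}

namespace Profile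

lemma ofRoles_menPref_mb : (ofRoles ma mb τ wa wb σ S T E P Q F).menPref mb = T :=
  if_pos rfl

lemma ofRoles_menPref_of_ne {m : M} (hm : m = ma ∨ τ = some m) (hmb : m ≠ mb) :
    (ofRoles ma mb τ wa wb σ S T E P Q F).menPref m = S :=
  (if_neg hmb).trans (if_pos hm)

lemma ofRoles_menPref_idle {m : M} (hma : m ≠ ma) (hmb : m ≠ mb) (hτ : τ ≠ some m) :
    (ofRoles ma mb τ wa wb σ S T E P Q F).menPref m = E :=
  (if_neg hmb).trans (if_neg (not_or.2 ⟨hma, hτ⟩))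

lemma ofRoles_womenPref_wa : (ofRoles ma mb τ wa wb σ S T E P Q F).womenPref wa = Q :=
  if_pos rfl

lemma ofRoles_womenPref_of_ne {w : W} (hw : w = wb ∨ σ = some w) (hwa : w ≠ wa) :
    (ofRoles ma mb τ wa wb σ S T E P Q F).womenPref w = P :=
  (if_neg hwa).trans (if_pos hw)

lemma ofRoles_womenPref_idle {w : W} (hwa : w ≠ wa) (hwb : w ≠ wb) (hσ : σ ≠ some w) :
    (ofRoles ma mb τ wa wb σ S T E P Q F).womenPref w = F :=
  (if_neg hwa).trans (if_neg (not_or.2 ⟨hwb, hσ⟩))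

end Profile

lemma Domain.Anonymous.mem_ofRoles (hanon : D.Anonymous) {m₀ : M} {w₀ : W}
    (hS : S ∈ D.men m₀) (hT : T ∈ D.men m₀) (hE : E ∈ D.men m₀)
    (hP : P ∈ D.women w₀) (hQ : Q ∈ D.women w₀) (hF : F ∈ D.women w₀) :
    D.mem (Profile.ofRoles ma mb τ wa wb σ S T E P Q F) := by
  constructor
  · intro m
    rw [hanon.1 m m₀]
    dsimp only [Profile.ofRoles]
    split_ifs <;> assumption
  · intro w
    rw [hanon.2 w w₀]
    dsimp only [Profile.ofRoles]
    split_ifs <;> assumption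

lemma configuration_ofRoles (hT : Descends T (some wb) (some wa) σ)
    (hQ : Descends Q (some mb) (some ma) τ) (hE : ∀ w, E.lt (some w) none)
    (hF : ∀ m, F.lt (some m) none) :
    Configuration (Profile.ofRoles ma mb τ wa wb σ S T E P Q F) ma mb τ wa wb σ where
  idle_man m hma hmb hτ := by rw [Profile.ofRoles_menPref_idle hma hmb hτ]; exact hE
  idle_woman w hwa hwb hσ := by rw [Profile.ofRoles_womenPref_idle hwa hwb hσ]; exact hF
  descends_mb := by rw [Profile.ofRoles_menPref_mb]; exact hT
  descends_wa := by rw [Profile.ofRoles_womenPref_wa]; exact hQ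

lemma Configuration.womenMatch_wb_eq_of_ofRoles {μ : Matching M W} {P' : LinearOrder (Option M)}
    (hC : Configuration (Profile.ofRoles ma mb τ wa wb σ S T E P Q F) ma mb τ wa wb σ)
    (hS : Descends S (some wa) (some wb) σ) (hP' : Descends P' (some ma) τ (some mb))
    (hst : Stable μ ((Profile.ofRoles ma mb τ wa wb σ S T E P Q F).updateWoman wb P')) :
    μ.womenMatch wb = some ma := by
  have hτ : τ ≠ some mb := (P'.ne_of_lt hP'.2.1).symm
  refine (hC.updateWoman P').womenMatch_wb_eq ?_ (fun m hm => ?_) ?_ hst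
  · rwa [Profile.updateWoman_menPref_s15 _ _, Profile.ofRoles_menPref_of_ne (Or.inl rfl) hC.ma_ne_mb]
  · rwa [Profile.updateWoman_menPref_s15 _ _, Profile.ofRoles_menPref_of_ne (Or.inr hm)
      (by rintro rfl; exact hτ hm)]
  · rwa [Profile.updateWoman_womenPref_self_s15]

lemma Configuration.menMatch_ma_eq_of_ofRoles {μ : Matching M W} {S' : LinearOrder (Option W)}
    (hC : Configuration (Profile.ofRoles ma mb τ wa wb σ S T E P Q F) ma mb τ wa wb σ)
    (hP : Descends P (some ma) (some mb) τ) (hS' : Descends S' (some wa) σ (some wb))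
    (hst : Stable μ ((Profile.ofRoles ma mb τ wa wb σ S T E P Q F).updateMan ma S')) :
    μ.menMatch ma = some wa := by
  have hσ : σ ≠ some wa := S'.ne_of_lt hS'.1
  refine (hC.updateMan S').menMatch_ma_eq ?_ ?_ (fun w hw => ?_) hst
  · rwa [Profile.updateMan_menPref_self_s15]
  · rwa [Profile.updateMan_womenPref_s15 _ _, Profile.ofRoles_womenPref_of_ne (Or.inl rfl)
      hC.wa_ne_wb.symm]
  · rwa [Profile.updateMan_womenPref_s15 _ _, Profile.ofRoles_womenPref_of_ne (Or.inr hw)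
      (by rintro rfl; exact hσ hw)]

end Deviations

/-- on an anonymous single-peaked domain with cyclical inclusion
for both sides that satisfies top dominance for neither side, no stable matching
rule is strategy-proof. -/
theorem no_stable_sp_without_top_dominance [Fintype M] [Fintype W]
    [DecidableEq M] [DecidableEq W]
    (ordM : LinearOrder M) (ordW : LinearOrder W) (D : Domain M W)
    (hsp : D.SinglePeakedDomain ordM ordW) (hanon : D.Anonymous)
    (hcim : CyclicalInclusionMen D) (hciw : CyclicalInclusionWomen D)
    (hTDm : ¬ TopDominanceMen D) (hTDw : ¬ TopDominanceWomen D)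
    (phi : Profile M W → Matching M W) (hstable : StableOn D phi) :
    ¬ StrategyProofOn D phi := by
  intro hSP
  obtain ⟨m₀, wa, wb, σ, ⟨S, hS, hSd⟩, ⟨S', hS', hS'd⟩, ⟨T, hT, hTd⟩⟩ :=
    exists_isGadget_of_not_topDominanceMen hsp hcim hTDm
  obtain ⟨w₀, ma, mb, τ, ⟨P, hP, hPd⟩, ⟨P', hP', hP'd⟩, ⟨Q, hQ, hQd⟩⟩ :=
    exists_isGadget_of_not_topDominanceWomen hsp hciw hTDw
  obtain ⟨E, hE, hEd⟩ := (hcim m₀).1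
  obtain ⟨F, hF, hFd⟩ := (hciw w₀).1
  set R := Profile.ofRoles ma mb τ wa wb σ S T E P Q F
  have hR : D.mem R := hanon.mem_ofRoles hS hT hE hP hQ hF
  have hC : Configuration R ma mb τ wa wb σ := configuration_ofRoles hTd hQd
    (fun w => hEd (some w) (Option.some_ne_none w)) (fun m => hFd (some m) (Option.some_ne_none m))
  have h₁ : (phi (R.updateWoman wb P')).womenMatch wb = some ma :=
    hC.womenMatch_wb_eq_of_ofRoles hSd hP'd (hstable _ (hR.updateWoman (hanon.2 wb w₀ ▸ hP')))
  have h₂ : (phi (R.updateMan ma S')).menMatch ma = some wa :=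
    hC.menMatch_ma_eq_of_ofRoles hPd hS'd (hstable _ (hR.updateMan (hanon.1 ma m₀ ▸ hS')))
  by_cases h : (phi R).womenMatch wb = some ma
  · have hma := (hSP R hR).1 ma S' (hanon.1 ma m₀ ▸ hS')
    rw [h₂, (phi R |>.consistent ma wb).2 h,
      Profile.ofRoles_menPref_of_ne (Or.inl rfl) hC.ma_ne_mb] at hma
    exact S.not_le_of_lt hSd.1 hma
  · have hwb := (hSP R hR).2 wb P' (hanon.2 wb w₀ ▸ hP')
    rw [h₁, Profile.ofRoles_womenPref_of_ne (Or.inl rfl) hC.wa_ne_wb.symm] at hwb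
    exact P.not_le_of_lt (hPd.lt_first ((hstable R hR).womenMatch_cases hC.idle_man wb) h) hwb
end

section
/- In the college admissions problem with responsive college preferences, a coalition consisting of at least one student and at least one college can manipulate the students-proposing deferred acceptance rule: there exist a market (3 colleges with quotas 2,1,1 and 5 students), a responsive preference profile, and a joint misreport by one student and one college (with the college's misreport also responsive) such that both coalition members are strictly better off under the SPDA outcome of the misreported profile according to their true preferences. -/
/-! College admissions (many-to-one matching) with 3 colleges of quotas 2, 1, 1
and 5 students.  College preferences are strict linear orders over sets of
students (encoded via `Finset`); student preferences are strict linear orders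
over `C ∪ {∅}` (encoded as `Option`). -/

/-- The colleges. -/
abbrev Coll := Fin 3
/-- The students. -/
abbrev Stud := Fin 5

/-- College quotas: 2, 1, 1. -/
def quota : Coll → ℕ := ![2, 1, 1]

/-- A preference profile for the college admissions problem. -/
structure CollegeProfile where
  collPref : Coll → LinearOrder (Finset Stud)
  studPref : Stud → LinearOrder (Option Coll)

/-- The set of students assigned to college `c` by the (many-to-one) matching
`ν`, viewed as a function from students to colleges or the outside option. -/
def assigned (ν : Stud → Option Coll) (c : Coll) : Finset Stud :=
  Finset.univ.filter (fun s => ν s = some c)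

/-- A many-to-one matching is feasible if no college exceeds its quota. -/
def Feasible (ν : Stud → Option Coll) : Prop :=
  ∀ c : Coll, (assigned ν c).card ≤ quota c

/-- Responsiveness of a college preference with quota `q`. -/
def Responsive (q : ℕ) (P : LinearOrder (Finset Stud)) : Prop :=
  ∀ T : Finset Stud, T.card < q →
    (∀ s ∉ T, (P.lt T (insert s T) ↔ P.lt ∅ {s})) ∧
    (∀ s ∉ T, ∀ s' ∉ T, (P.lt (insert s' T) (insert s T) ↔ P.lt {s'} {s}))

def ResponsiveProfile (P : CollegeProfile) : Prop :=
  ∀ c : Coll, Responsive (quota c) (P.collPref c)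

/-- Stability of a many-to-one matching: feasibility, individual rationality
for colleges and students, and no blocking pair. -/
def CStable (ν : Stud → Option Coll) (P : CollegeProfile) : Prop :=
  Feasible ν ∧
  (∀ c : Coll, ¬ ∃ s ∈ assigned ν c, (P.collPref c).lt {s} ∅) ∧
  (∀ s : Stud, (P.studPref s).le none (ν s)) ∧
  ¬ ∃ (c : Coll) (s : Stud), (P.studPref s).lt (ν s) (some c) ∧
      (((assigned ν c).card < quota c ∧ (P.collPref c).lt ∅ {s}) ∨
        ∃ s' ∈ assigned ν c, (P.collPref c).lt {s'} {s})

/-- The student-optimal stable matching: the outcome of the students-proposing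
deferred acceptance rule under responsive college preferences. -/
def StudentOptimalStable (ν : Stud → Option Coll) (P : CollegeProfile) : Prop :=
  CStable ν P ∧ ∀ ν' : Stud → Option Coll, CStable ν' P →
    ∀ s : Stud, (P.studPref s).le (ν' s) (ν s)


/-! ### Auxiliary construction for the manipulation example -/

@[reducible] def cwP : Coll → Stud → ℤ := ![![2,1,4,8,16],![8,2,16,1,4],![1,8,2,4,16]]
@[reducible] def cwQ : Coll → Stud → ℤ := ![![-2,1,-4,8,16],![8,2,16,1,4],![1,8,2,4,16]]
@[reducible] def cu (w : Stud → ℤ) (T : Finset Stud) : ℤ := ∑ s ∈ T, w s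
@[reducible] def sw : Stud → Option Coll → ℤ := fun s o =>
  Option.casesOn o (![1,0,0,2,1] s) (fun c => ![![2,0,3],![3,1,2],![2,1,3],![1,0,3],![2,3,0]] s c)

lemma hcP : ∀ c : Coll, Function.Injective (cu (cwP c)) := by decide
lemma hcQ : ∀ c : Coll, Function.Injective (cu (cwQ c)) := by decide
lemma hsw : ∀ s : Stud, Function.Injective (sw s) := by decide

@[reducible] def Pprof : CollegeProfile :=
  ⟨fun c => LinearOrder.lift' (cu (cwP c)) (hcP c),
   fun s => LinearOrder.lift' (sw s) (hsw s)⟩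
@[reducible] def Qprof : CollegeProfile :=
  ⟨fun c => LinearOrder.lift' (cu (cwQ c)) (hcQ c),
   fun s => LinearOrder.lift' (sw s) (hsw s)⟩

@[reducible] def nuP : Stud → Option Coll := ![some 0, some 2, some 0, none, some 1]
@[reducible] def nuQ : Stud → Option Coll := ![none, some 0, some 1, some 2, some 0]

lemma vec5 (v : Stud → Option Coll) : v = ![v 0, v 1, v 2, v 3, v 4] := by
  funext i; fin_cases i <;> rfl

set_option maxHeartbeats 4000000 in
lemma keyP : ∀ a b c d e : Option Coll,
    CStable ![a,b,c,d,e] Pprof → ∀ s : Stud,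
      (Pprof.studPref s).le (![a,b,c,d,e] s) (nuP s) := by
  unfold CStable Feasible; decide

set_option maxHeartbeats 4000000 in
lemma keyQ : ∀ a b c d e : Option Coll,
    CStable ![a,b,c,d,e] Qprof → ∀ s : Stud,
      (Qprof.studPref s).le (![a,b,c,d,e] s) (nuQ s) := by
  unfold CStable Feasible; decide

lemma stableP : CStable nuP Pprof := by unfold CStable Feasible; decide
lemma stableQ : CStable nuQ Qprof := by unfold CStable Feasible; decide
lemma respP : ResponsiveProfile Pprof := by unfold ResponsiveProfile Responsive; decide
lemma respQ : ResponsiveProfile Qprof := by unfold ResponsiveProfile Responsive; decide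

lemma optP : StudentOptimalStable nuP Pprof := by
  refine ⟨stableP, fun ν' h s => ?_⟩
  rw [vec5 ν'] at h
  have := keyP (ν' 0) (ν' 1) (ν' 2) (ν' 3) (ν' 4) h s
  rwa [← congrFun (vec5 ν') s] at this

lemma optQ : StudentOptimalStable nuQ Qprof := by
  refine ⟨stableQ, fun ν' h s => ?_⟩
  rw [vec5 ν'] at h
  have := keyQ (ν' 0) (ν' 1) (ν' 2) (ν' 3) (ν' 4) h s
  rwa [← congrFun (vec5 ν') s] at this

/-- in the college admissions problem (3 colleges with quotas
2, 1, 1 and 5 students) there are a responsive profile `P` and a joint misreport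
`Q` by one student `s₀` and one college `c₀` (with the misreport responsive)
such that both coalition members are strictly better off at the SPDA outcome of
`Q` than at the SPDA outcome of `P` according to their true preferences. -/
theorem college_coalition_manipulation :
    ∃ (P Q : CollegeProfile) (s₀ : Stud) (c₀ : Coll),
      ResponsiveProfile P ∧ ResponsiveProfile Q ∧
      (∀ c : Coll, c ≠ c₀ → Q.collPref c = P.collPref c) ∧
      (∀ s : Stud, s ≠ s₀ → Q.studPref s = P.studPref s) ∧
      ∃ (ν ν' : Stud → Option Coll),
        StudentOptimalStable ν P ∧ StudentOptimalStable ν' Q ∧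
        (P.studPref s₀).lt (ν s₀) (ν' s₀) ∧
        (P.collPref c₀).lt (assigned ν c₀) (assigned ν' c₀) := by
  refine ⟨Pprof, Qprof, 1, 0, respP, respQ, ?_, ?_, nuP, nuQ, optP, optQ, ?_, ?_⟩
  · intro c hc
    fin_cases c
    · exact absurd rfl hc
    · rfl
    · rfl
  · intro s _; rfl
  · decide
  · unfold assigned; decide
end
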